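/- Let n be a positive integer and p ∈ ℝ[t]. Then p ∈ 𝒫ₙ^{mon} (i.e., p(A) is entrywise nonnegative for every entrywise nonnegative n-by-n monomial matrix A) if and only if p_{(r,k)} ∈ 𝒫₁ for every k ∈ {1,…,n} and every r ∈ {0,…,k−1}. -/

import Mathlib

/-!
Write `A = diag(d) P_σ` with `d > 0`. Then `(A^m)_{ij} = [σ^m i = j] c_m` with
`c_m = ∏_{u<m} d(σ^u i)`. If `k` is the length of the cycle of `σ` through `i` and `j = σ^r i`,
then `c_{m+k} = c_m s^k`, where `s` is the geometric mean of `d` along that cycle, so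
`p(A)_{ij} = (c_r / s^r) p_{(r,k)}(s)`: each entry of `p(A)` is a positive multiple of a
`r mod k`-part evaluated at a positive point. Conversely, the `k`-cycle `(0 1 … k-1)` scaled by
`t > 0` has `p(A)_{0r} = p_{(r,k)}(t)`, and continuity gives the value at `t = 0`.
-/

open Matrix

/-- The `r mod k`-part of `p`: `p_{(r,k)}(t) := Σ_{j ≤ deg p, j mod k = r} a_j t^j`. -/
noncomputable def polyPart (p : Polynomial ℝ) (k r : ℕ) : Polynomial ℝ :=
  ∑ j ∈ Finset.range (p.natDegree + 1),
    if j % k = r then Polynomial.C (p.coeff j) * Polynomial.X ^ j else 0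

/-- `A` is a monomial (generalized permutation) matrix: `A = D P` with `D` an
invertible diagonal matrix and `P` a permutation matrix. -/
def IsMonomialMatrix {n : ℕ} (A : Matrix (Fin n) (Fin n) ℝ) : Prop :=
  ∃ (d : Fin n → ℝ) (σ : Equiv.Perm (Fin n)),
    (∀ i, d i ≠ 0) ∧ A = Matrix.diagonal d * σ.permMatrix ℝ

open Polynomial Finset Function Equiv

theorem Finset.prod_range_eq_pow_mul_of_periodic {M : Type*} [CommMonoid M] {f : ℕ → M} {k : ℕ}
    (hf : Periodic f k) (m : ℕ) :
    ∏ u ∈ range m, f u = (∏ u ∈ range k, f u) ^ (m / k) * ∏ u ∈ range (m % k), f u := by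
  have hshift : ∀ q u, f (k * q + u) = f u := fun q u => by
    rw [add_comm, mul_comm]; exact hf.nat_mul q u
  have hblocks : ∀ q, ∏ u ∈ range (k * q), f u = (∏ u ∈ range k, f u) ^ q := by
    intro q
    induction q with
    | zero => simp
    | succ q ih => simp only [mul_add_one, prod_range_add, ih, hshift, pow_succ]
  conv_lhs => rw [← Nat.div_add_mod m k]
  simp only [prod_range_add, hblocks, hshift]

theorem Equiv.Perm.pow_apply_eq_pow_apply_iff_mod {α : Type*} {σ : Perm α} {i : α} {m r : ℕ}
    (hr : r < minimalPeriod σ i) :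
    (σ ^ m) i = (σ ^ r) i ↔ m % minimalPeriod σ i = r := by
  rw [← Perm.iterate_eq_pow, ← Perm.iterate_eq_pow, ← iterate_mod_minimalPeriod_eq,
    iterate_eq_iterate_iff_of_lt_minimalPeriod (Nat.mod_lt _ (by omega)) hr]

section

variable {ι R : Type*} [Fintype ι] [DecidableEq ι] [CommSemiring R]

theorem Matrix.diagonal_mul_permMatrix_apply (d : ι → R) (σ : Perm ι) (i j : ι) :
    (diagonal d * σ.permMatrix R) i j = if σ i = j then d i else 0 := by
  simp [diagonal_mul, Perm.permMatrix, PEquiv.toMatrix_apply, mul_ite, eq_comm]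

theorem Matrix.diagonal_mul_permMatrix_pow_apply (d : ι → R) (σ : Perm ι) (m : ℕ) (i j : ι) :
    ((diagonal d * σ.permMatrix R) ^ m) i j =
      if (σ ^ m) i = j then ∏ u ∈ range m, d ((σ ^ u) i) else 0 := by
  induction m generalizing j with
  | zero => simp [one_apply]
  | succ m ih =>
    rw [pow_succ, mul_apply]
    simp only [ih, diagonal_mul_permMatrix_apply, ite_mul, zero_mul, sum_ite_eq, mem_univ, if_true]
    rw [mul_ite, mul_zero, ← prod_range_succ, pow_succ', Perm.mul_apply]

theorem Polynomial.aeval_matrix_apply (A : Matrix ι ι R) (p : R[X]) (i j : ι) :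
    aeval A p i j = ∑ m ∈ range (p.natDegree + 1), p.coeff m * (A ^ m) i j := by
  simp [aeval_eq_sum_range, Matrix.sum_apply]

end

theorem eval_polyPart (p : ℝ[X]) (k r : ℕ) (t : ℝ) :
    (polyPart p k r).eval t =
      ∑ m ∈ range (p.natDegree + 1), if m % k = r then p.coeff m * t ^ m else 0 := by
  simp [polyPart, eval_finsetSum, apply_ite (Polynomial.eval t)]

theorem aeval_diagonal_mul_permMatrix_apply {ι : Type*} [Fintype ι] [DecidableEq ι]
    {d : ι → ℝ} {σ : Perm ι} {i j : ι} {k r : ℕ} (hσk : (σ ^ k) i = i)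
    (hj : ∀ m, (σ ^ m) i = j ↔ m % k = r) {s : ℝ} (hs : s ≠ 0)
    (hsk : s ^ k = ∏ u ∈ range k, d ((σ ^ u) i)) (p : ℝ[X]) :
    aeval (diagonal d * σ.permMatrix ℝ) p i j =
      (∏ u ∈ range r, d ((σ ^ u) i)) / s ^ r * (polyPart p k r).eval s := by
  have hper : Periodic (fun u => d ((σ ^ u) i)) k := fun u => by
    simp only [pow_add, Perm.mul_apply, hσk]
  have hprod : ∀ m, m % k = r →
      ∏ u ∈ range m, d ((σ ^ u) i) = (∏ u ∈ range r, d ((σ ^ u) i)) / s ^ r * s ^ m := by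
    intro m hm
    rw [prod_range_eq_pow_mul_of_periodic hper, ← hsk, hm]
    conv_rhs => rw [← Nat.div_add_mod m k, hm, pow_add, pow_mul]
    field_simp
  rw [aeval_matrix_apply, eval_polyPart, mul_sum]
  refine sum_congr rfl fun m _ => ?_
  rw [diagonal_mul_permMatrix_pow_apply]
  by_cases hm : m % k = r
  · rw [if_pos ((hj m).2 hm), if_pos hm, hprod m hm]
    ring
  · rw [if_neg (mt (hj m).1 hm), if_neg hm, mul_zero, mul_zero]

theorem Fin.val_cycleRange_pow_apply_zero {n : ℕ} [NeZero n] (j : Fin n) (m : ℕ) :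
    ((cycleRange j ^ m) 0 : ℕ) = m % (j + 1) := by
  induction m with
  | zero => simp
  | succ m ih =>
    have hle : (cycleRange j ^ m) 0 ≤ j := by
      rw [Fin.le_def, ih]; exact Nat.le_of_lt_succ (Nat.mod_lt _ (Nat.succ_pos _))
    have hlt := Nat.mod_lt m (Nat.succ_pos j)
    rw [pow_succ', Perm.mul_apply, coe_cycleRange_of_le hle, ← Nat.mod_add_mod]
    split_ifs with h <;> rw [Fin.ext_iff, ih] at h
    · rw [h, Nat.mod_self]
    · rw [ih]
      exact (Nat.mod_eq_of_lt (by omega)).symm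

theorem nonneg_of_forall_pos_nonneg {f : ℝ → ℝ} (hf : Continuous f) (h : ∀ t, 0 < t → 0 ≤ f t)
    {t : ℝ} (ht : 0 ≤ t) : 0 ≤ f t := by
  have hsub : closure (Set.Ioi (0 : ℝ)) ⊆ {t | 0 ≤ f t} :=
    (isClosed_le continuous_const hf).closure_subset_iff.2 h
  exact hsub (closure_Ioi (0 : ℝ) ▸ ht)

theorem exists_isMonomialMatrix_aeval_apply_eq_eval_polyPart {n k r : ℕ} (hk : 0 < k)
    (hkn : k ≤ n) (hr : r < k) {t : ℝ} (ht : 0 < t) (p : ℝ[X]) :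
    ∃ A : Matrix (Fin n) (Fin n) ℝ, IsMonomialMatrix A ∧ (∀ i j, 0 ≤ A i j) ∧
      ∃ i j, aeval A p i j = (polyPart p k r).eval t := by
  have : NeZero n := NeZero.of_pos (hk.trans_le hkn)
  set σ := Fin.cycleRange (⟨k - 1, by omega⟩ : Fin n)
  have hσ : ∀ m, ((σ ^ m) 0 : ℕ) = m % k := fun m => by
    rw [Fin.val_cycleRange_pow_apply_zero, Nat.sub_add_cancel hk]
  refine ⟨diagonal (fun _ => t) * σ.permMatrix ℝ, ⟨_, σ, fun _ => ht.ne', rfl⟩,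
    fun i j => ?_, 0, ⟨r, hr.trans_le hkn⟩, ?_⟩
  · rw [diagonal_mul_permMatrix_apply]
    split_ifs <;> positivity
  · have hσk : (σ ^ k) 0 = 0 := Fin.ext (by rw [hσ, Nat.mod_self]; rfl)
    have hj : ∀ m, (σ ^ m) 0 = ⟨r, hr.trans_le hkn⟩ ↔ m % k = r := fun m => by
      rw [Fin.ext_iff, hσ]
    rw [aeval_diagonal_mul_permMatrix_apply hσk hj ht.ne' (by simp)]
    simp [ht.ne']

theorem aeval_diagonal_mul_permMatrix_apply_nonneg {ι : Type*} [Fintype ι] [DecidableEq ι]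
    {p : ℝ[X]} (hp : ∀ k, 1 ≤ k → k ≤ Fintype.card ι → ∀ r < k, ∀ a : ℝ, 0 ≤ a →
      0 ≤ (polyPart p k r).eval a)
    {d : ι → ℝ} (hd : ∀ i, 0 < d i) (σ : Perm ι) (i j : ι) :
    0 ≤ aeval (diagonal d * σ.permMatrix ℝ) p i j := by
  set k := minimalPeriod σ i
  have hk : 0 < k := minimalPeriod_pos_of_mem_periodicPts (σ.injective.mem_periodicPts i)
  by_cases hj : ∃ m, (σ ^ m) i = j
  · obtain ⟨m₀, rfl⟩ := hj
    have hb : 0 < ∏ u ∈ range k, d ((σ ^ u) i) := prod_pos fun u _ => hd _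
    set s := (∏ u ∈ range k, d ((σ ^ u) i)) ^ (k⁻¹ : ℝ)
    have hs : 0 < s := Real.rpow_pos_of_pos hb _
    have hr : m₀ % k < k := Nat.mod_lt _ hk
    have hσk : (σ ^ k) i = i := by rw [← Perm.iterate_eq_pow]; exact iterate_minimalPeriod
    have hσm₀ : (σ ^ m₀) i = (σ ^ (m₀ % k)) i := by
      simp only [← Perm.iterate_eq_pow]
      exact iterate_mod_minimalPeriod_eq.symm
    rw [hσm₀, aeval_diagonal_mul_permMatrix_apply hσk
      (fun _ => Perm.pow_apply_eq_pow_apply_iff_mod hr) hs.ne'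
      (Real.rpow_inv_natCast_pow hb.le hk.ne')]
    exact mul_nonneg (div_nonneg (prod_nonneg fun u _ => (hd _).le) (pow_nonneg hs.le _))
      (hp k hk minimalPeriod_le_card _ hr s hs.le)
  · push Not at hj
    rw [aeval_matrix_apply]
    exact sum_nonneg fun m _ => by simp [diagonal_mul_permMatrix_pow_apply, hj m]

theorem mem_Pn_mon_iff_polyPart_general (n : ℕ) (p : Polynomial ℝ) :
    (∀ A : Matrix (Fin n) (Fin n) ℝ, IsMonomialMatrix A → (∀ i j, 0 ≤ A i j) →
        ∀ i j, 0 ≤ Polynomial.aeval A p i j) ↔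
      (∀ k, 1 ≤ k → k ≤ n → ∀ r < k, ∀ a : ℝ, 0 ≤ a → 0 ≤ (polyPart p k r).eval a) := by
  constructor
  · intro hP k hk hkn r hr a ha
    refine nonneg_of_forall_pos_nonneg (polyPart p k r).continuous (fun t ht => ?_) ha
    obtain ⟨A, hA, hA0, i, j, hAp⟩ :=
      exists_isMonomialMatrix_aeval_apply_eq_eval_polyPart hk hkn hr ht p
    exact hAp ▸ hP A hA hA0 i j
  · rintro hP A ⟨d, σ, hd, rfl⟩ hA0 i j
    have hdpos : ∀ l, 0 < d l := fun l => (hd l).symm.lt_of_le (by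
      simpa [diagonal_mul_permMatrix_apply] using hA0 l (σ l))
    exact aeval_diagonal_mul_permMatrix_apply_nonneg (by simpa using hP) hdpos σ i j

/-- Let `n ≥ 1` and `p ∈ ℝ[t]`. Then `p ∈ 𝒫ₙ^{mon}` (i.e., `p(A)` is
entrywise nonnegative for every entrywise nonnegative `n`-by-`n` monomial matrix `A`)
if and only if `p_{(r,k)} ∈ 𝒫₁` for every `k ∈ {1,…,n}` and every `r ∈ {0,…,k-1}`. -/
theorem mem_Pn_mon_iff_polyPart (n : ℕ) (hn : 0 < n) (p : Polynomial ℝ) :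
    (∀ A : Matrix (Fin n) (Fin n) ℝ, IsMonomialMatrix A → (∀ i j, 0 ≤ A i j) →
        ∀ i j, 0 ≤ Polynomial.aeval A p i j) ↔
      (∀ k, 1 ≤ k → k ≤ n → ∀ r < k, ∀ a : ℝ, 0 ≤ a → 0 ≤ (polyPart p k r).eval a) :=
  mem_Pn_mon_iff_polyPart_general n p
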